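/- For every nonnegative integer n and every real ℓ, the double sum over i + j = n of (-1)^i * C(ℓ - 1 - i, i) * (sum over k from 0 to j of C(2n + 1, k) * C(ℓ - 1 - 2i, j - k)) equals the sum over k from 0 to n of C(2n + 1, k). -/

import Mathlib

/-!
Write `S_c(m, x) = ∑ᵢ (-1)^i C(x-i, i) C(x-c-2i, m-i)`; the inner sum of the theorem is
`S_0(n-k, ℓ-1)`. Pascal's rule on the second factor gives
`S_c(m+1, x) = S_{c+1}(m+1, x) + S_{c+1}(m, x)`, and on the first factor
`S_{c+1}(m+1, x) = S_c(m+1, x-1) - S_{c+1}(m, x-2)`. Hence if `S_1(m, ·)` is 2-periodic then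
`S_0(m+1, ·)` is 1-periodic; as a polynomial in `x` it is then constant, equal to its value `1`
at `x = m+1`, where every term but `i = 0` vanishes. So `S_1(m+1, ·) = 1 - S_1(m, ·)` is again
2-periodic, and induction on `m` gives `S_0 = 1`.
-/

/-- Generalized binomial coefficient for a real upper argument. -/
noncomputable def gchoose (x : ℝ) (k : ℕ) : ℝ :=
  (descPochhammer ℝ k).eval x / k.factorial

open Finset Polynomial Function

theorem gchoose_eq_choose (x : ℝ) (k : ℕ) : gchoose x k = Ring.choose x k := by
  rw [Ring.choose_eq_smul, gchoose, ← aeval_eq_smeval, aeval_def, eval₂_eq_eval_map,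
    descPochhammer_map, smul_eq_mul, div_eq_inv_mul]

section BinomialRing

variable {R : Type*} [CommRing R] [BinomialRing R]

def altChooseSum (c : R) (m : ℕ) (x : R) : R :=
  ∑ i ∈ range (m + 1), (-1) ^ i * Ring.choose (x - i) i * Ring.choose (x - c - 2 * i) (m - i)

theorem altChooseSum_succ (c : R) (m : ℕ) (x : R) :
    altChooseSum c (m + 1) x = altChooseSum (c + 1) (m + 1) x + altChooseSum (c + 1) m x := by
  simp only [altChooseSum]
  rw [sum_range_succ _ (m + 1), sum_range_succ _ (m + 1), Nat.sub_self, Ring.choose_zero_right,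
    Ring.choose_zero_right, add_right_comm, ← sum_add_distrib]
  congr 1
  refine sum_congr rfl fun i hi => ?_
  have hm : m + 1 - i = m - i + 1 := by have := mem_range.mp hi; omega
  rw [hm, show x - c - 2 * i = x - (c + 1) - 2 * i + 1 by ring, Ring.choose_succ_succ]
  ring

theorem altChooseSum_add_one_succ (c : R) (m : ℕ) (x : R) :
    altChooseSum (c + 1) (m + 1) x =
      altChooseSum c (m + 1) (x - 1) - altChooseSum (c + 1) m (x - 2) := by
  suffices altChooseSum (c + 1) (m + 1) x - altChooseSum c (m + 1) (x - 1) =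
      -altChooseSum (c + 1) m (x - 2) by linear_combination this
  rw [altChooseSum, altChooseSum, ← sum_sub_distrib, sum_range_succ']
  simp only [Nat.cast_zero, sub_zero, mul_zero, Ring.choose_zero_right, sub_sub, add_comm (1 : R),
    sub_self, add_zero, altChooseSum, ← sum_neg_distrib]
  refine sum_congr rfl fun i _ => ?_
  have hpascal := Ring.choose_succ_succ (x - (2 + i)) i
  rw [show x - (2 + i) + 1 = x - (i + 1 : ℕ) by push_cast; ring] at hpascal
  rw [Nat.add_sub_add_right, show x - ((i + 1 : ℕ) + 1) = x - (2 + i) by push_cast; ring, hpascal]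
  push_cast
  ring_nf

theorem altChooseSum_natCast_self (m : ℕ) : altChooseSum (0 : R) m m = 1 := by
  rw [altChooseSum, sum_eq_single_of_mem 0 (by simp)]
  · simp [Ring.choose_natCast]
  intro i hi hi0
  have him : i ≤ m := Nat.lt_succ_iff.mp (mem_range.mp hi)
  rcases le_or_gt (2 * i) m with h2i | h2i
  · rw [show (m : R) - 0 - 2 * i = (m - 2 * i : ℕ) by push_cast [h2i]; ring, Ring.choose_natCast,
      Nat.choose_eq_zero_of_lt (by omega), Nat.cast_zero, mul_zero]
  · rw [show (m : R) - i = (m - i : ℕ) by push_cast [him]; ring, Ring.choose_natCast,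
      Nat.choose_eq_zero_of_lt (by omega), Nat.cast_zero, mul_zero, zero_mul]

theorem map_altChooseSum {S F : Type*} [CommRing S] [BinomialRing S] [FunLike F R S]
    [RingHomClass F R S] (f : F) (c : R) (m : ℕ) (x : R) :
    f (altChooseSum c m x) = altChooseSum (f c) m (f x) := by
  simp [altChooseSum, Ring.map_choose, map_ofNat]

theorem Function.Periodic.altChooseSum_succ {c : R} {m : ℕ}
    (h : Periodic (altChooseSum (c + 1) m) 2) : Periodic (altChooseSum c (m + 1)) 1 := by
  intro x
  rw [_root_.altChooseSum_succ c m (x + 1), altChooseSum_add_one_succ, add_sub_cancel_right,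
    show x + 1 - 2 = x - 1 by ring, ← h (x - 1), show x - 1 + 2 = x + 1 by ring, sub_add_cancel]

end BinomialRing

theorem Polynomial.eval_eq_of_periodic {R : Type*} [CommRing R] [IsDomain R] [CharZero R]
    {p : R[X]} {c : R} (hc : c ≠ 0) (h : Periodic p.eval c) (x y : R) : p.eval x = p.eval y := by
  have : p = C (p.eval y) := by
    refine eq_of_infinite_eval_eq _ _ (Set.infinite_of_injective_forall_mem
      (f := fun n : ℕ => y + n * c) ?_ ?_)
    · intro a b hab
      simpa [hc] using hab
    · intro n
      simpa using h.nat_mul n y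
  rw [this, eval_C, eval_C]

section CharZeroField

variable {K : Type*} [Field K] [CharZero K]

theorem altChooseSum_zero_eq_one_of_periodic {m : ℕ} (h : Periodic (altChooseSum (0 : K) m) 1)
    (x : K) : altChooseSum 0 m x = 1 := by
  have hp : ∀ y : K, (altChooseSum (0 : K[X]) m X).eval y = altChooseSum 0 m y := fun y => by
    rw [← coe_evalRingHom, map_altChooseSum, map_zero, coe_evalRingHom, eval_X]
  have hper : Periodic (altChooseSum (0 : K[X]) m X).eval 1 := fun y => by simp only [hp, h y]
  rw [← hp, eval_eq_of_periodic one_ne_zero hper x m, hp, altChooseSum_natCast_self]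

theorem periodic_altChooseSum_one (m : ℕ) : Periodic (altChooseSum (1 : K) m) 2 := by
  induction m with
  | zero => intro x; simp [altChooseSum]
  | succ m ih =>
    have hone := altChooseSum_zero_eq_one_of_periodic (zero_add (1 : K) ▸ ih).altChooseSum_succ
    intro x
    have h := altChooseSum_succ (0 : K) m
    simp only [zero_add, hone] at h
    rw [eq_sub_of_add_eq (h (x + 2)).symm, eq_sub_of_add_eq (h x).symm, ih]

theorem altChooseSum_zero_eq_one (m : ℕ) (x : K) : altChooseSum 0 m x = 1 := by
  cases m with
  | zero => simp [altChooseSum]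
  | succ m =>
    exact altChooseSum_zero_eq_one_of_periodic
      (zero_add (1 : K) ▸ periodic_altChooseSum_one m).altChooseSum_succ x

end CharZeroField

theorem double_sum_collapse (n : ℕ) (ℓ : ℝ) :
    ∑ ij ∈ Finset.HasAntidiagonal.antidiagonal n,
        (-1 : ℝ) ^ ij.1 * gchoose (ℓ - 1 - ij.1) ij.1 *
          (∑ k ∈ Finset.range (ij.2 + 1),
            ((2 * n + 1).choose k : ℝ) * gchoose (ℓ - 1 - 2 * ij.1) (ij.2 - k)) =
      ∑ k ∈ Finset.range (n + 1), ((2 * n + 1).choose k : ℝ) := by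
  simp only [Nat.sum_antidiagonal_eq_sum_range_succ_mk, mul_sum]
  rw [sum_comm' (t' := range (n + 1)) (s' := fun k => range (n - k + 1))
    (fun i k => by simp only [mem_range]; omega)]
  refine sum_congr rfl fun k _ => ?_
  calc _ = ((2 * n + 1).choose k : ℝ) * altChooseSum 0 (n - k) (ℓ - 1) := by
        rw [altChooseSum, mul_sum]
        refine sum_congr rfl fun i _ => ?_
        rw [gchoose_eq_choose, gchoose_eq_choose, sub_zero, Nat.sub_right_comm, sub_sub, sub_sub]
        ring
    _ = _ := by rw [altChooseSum_zero_eq_one, mul_one]
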